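/- arXiv:1111.7107 — 4 statements merged into one kernel-verified Lean document; each statement's English description precedes it below -/
import Mathlib

section
/- Let C be a nonempty bounded closed convex subset of a uniformly convex Banach space E and let T : C → C be an asymptotically nonexpansive mapping. Then the fixed point set F(T) = {x ∈ C : Tx = x} is a nonempty, closed and convex subset of C. -/
/-!
Let `z` be an asymptotic center in `C` of an orbit `xₙ = T^[n] x₀`, i.e. a minimizer over `C` of
`r w = limsup ‖xₙ - w‖`; it exists because, by uniform convexity, minimizing sequences of `r` are
Cauchy. Since `r (T^[m] z) ≤ k m * r z`, the iterates of `z` form a minimizing sequence as well, so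
`T^[m] z → z` and `z` is fixed. If `p` and `q` are fixed, `T^[n]` of their midpoint lies within
`k n * ‖p - q‖ / 2` of both, so by uniform convexity it converges to the midpoint, which is
therefore fixed. The fixed point set is closed since `T` is continuous on `C`, and a closed set
containing the midpoints of its points is convex.
-/

open Filter Set Topology

theorem IsClosed.ordConnected_of_midpoint_mem {s : Set ℝ} (hs : IsClosed s)
    (hmid : ∀ a ∈ s, ∀ b ∈ s, midpoint ℝ a b ∈ s) : s.OrdConnected := by
  refine ⟨fun a ha b hb t ht => ?_⟩
  by_contra hts
  -- `a' < t < b'` are the ends of the gap of `s` around `t`, but their midpoint lies in `s`.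
  set a' := sSup (s ∩ Icc a t)
  set b' := sInf (s ∩ Icc t b)
  have ha' : a' ∈ s ∩ Icc a t :=
    (hs.inter isClosed_Icc).csSup_mem ⟨a, ha, le_rfl, ht.1⟩ bddAbove_Icc.inter_of_right
  have hb' : b' ∈ s ∩ Icc t b :=
    (hs.inter isClosed_Icc).csInf_mem ⟨b, hb, ht.2, le_rfl⟩ bddBelow_Icc.inter_of_right
  have hat : a' < t := lt_of_le_of_ne ha'.2.2 fun h => hts (h ▸ ha'.1)
  have htb : t < b' := lt_of_le_of_ne hb'.2.1 fun h => hts (h ▸ hb'.1)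
  have hm : midpoint ℝ a' b' = (a' + b') / 2 := by
    rw [midpoint_eq_smul_add, smul_eq_mul, invOf_eq_inv]; ring
  have hms := hmid a' ha'.1 b' hb'.1
  rw [hm] at hms
  rcases le_total ((a' + b') / 2) t with hle | hge
  · have : (a' + b') / 2 ≤ a' :=
      le_csSup bddAbove_Icc.inter_of_right ⟨hms, by linarith [ha'.2.1], hle⟩
    linarith
  · have : b' ≤ (a' + b') / 2 :=
      csInf_le bddBelow_Icc.inter_of_right ⟨hms, hge, by linarith [hb'.2.2]⟩
    linarith

theorem IsClosed.convex_of_midpoint_mem {E : Type*} [AddCommGroup E] [Module ℝ E]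
    [TopologicalSpace E] [IsTopologicalAddGroup E] [ContinuousSMul ℝ E] {s : Set E}
    (hs : IsClosed s) (hmid : ∀ x ∈ s, ∀ y ∈ s, midpoint ℝ x y ∈ s) : Convex ℝ s := by
  refine convex_iff_segment_subset.2 fun x hx y hy => ?_
  rw [segment_eq_image_lineMap]
  rintro _ ⟨t, ht, rfl⟩
  have hline : (AffineMap.lineMap x y ⁻¹' s : Set ℝ).OrdConnected :=
    (hs.preimage AffineMap.lineMap_continuous).ordConnected_of_midpoint_mem fun a ha b hb => by
      simpa only [mem_preimage, AffineMap.map_midpoint] using hmid _ ha _ hb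
  exact hline.out (by simpa using hx) (by simpa using hy) ht

theorem isFixedPt_of_tendsto_iterate_of_continuousWithinAt {α : Type*} [TopologicalSpace α]
    [T2Space α] {f : α → α} {s : Set α} {x y : α}
    (hy : Tendsto (fun n => f^[n] x) atTop (𝓝 y)) (hxs : ∀ n, f^[n] x ∈ s)
    (hf : ContinuousWithinAt f s y) : Function.IsFixedPt f y := by
  refine tendsto_nhds_unique ((tendsto_add_atTop_iff_nat 1).1 ?_) hy
  simp only [Function.iterate_succ']
  exact hf.tendsto.comp (tendsto_nhdsWithin_iff.2 ⟨hy, Eventually.of_forall hxs⟩)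

section UniformConvex

variable {E : Type*} [NormedAddCommGroup E] [NormedSpace ℝ E] [UniformConvexSpace E]

theorem exists_forall_norm_add_le_two_sub_mul {ε : ℝ} (hε : 0 < ε) :
    ∃ δ > 0, ∀ (R : ℝ) ⦃x y : E⦄, ‖x‖ ≤ R → ‖y‖ ≤ R → ε * R ≤ ‖x - y‖ →
      ‖x + y‖ ≤ (2 - δ) * R := by
  obtain ⟨δ, hδ, huc⟩ := exists_forall_closed_ball_dist_add_le_two_sub E hε
  refine ⟨δ, hδ, fun R x y hx hy hxy => ?_⟩
  rcases (norm_nonneg x).trans hx |>.eq_or_lt with rfl | hR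
  · simp [norm_le_zero_iff.1 hx, norm_le_zero_iff.1 hy]
  have hscale : ∀ v : E, ‖R⁻¹ • v‖ = ‖v‖ / R := fun v => by
    rw [norm_smul, Real.norm_of_nonneg (inv_nonneg.2 hR.le), inv_mul_eq_div]
  have h := huc (x := R⁻¹ • x) (y := R⁻¹ • y)
    (by rw [hscale]; exact (div_le_one hR).2 hx) (by rw [hscale]; exact (div_le_one hR).2 hy)
    (by rw [← smul_sub, hscale]; exact (le_div_iff₀ hR).2 hxy)
  rwa [← smul_add, hscale, div_le_iff₀ hR] at h

theorem tendsto_midpoint_of_dist_le {ι : Type*} {l : Filter ι} {p q : E} {y : ι → E}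
    {c : ι → ℝ} (hc : Tendsto c l (𝓝 1))
    (hpy : ∀ᶠ i in l, dist p (y i) ≤ c i * (dist p q / 2))
    (hyq : ∀ᶠ i in l, dist (y i) q ≤ c i * (dist p q / 2)) :
    Tendsto y l (𝓝 (midpoint ℝ p q)) := by
  rcases (dist_nonneg (x := p) (y := q)).eq_or_lt with hd | hd
  · rw [eq_comm, dist_eq_zero] at hd
    subst hd
    refine tendsto_const_nhds.congr' ?_
    filter_upwards [hpy] with i hi
    rw [midpoint_self]
    simpa using hi
  rw [Metric.tendsto_nhds]
  intro ε hε
  obtain ⟨δ, hδ, huc⟩ := exists_forall_norm_add_le_two_sub_mul (E := E) (div_pos hε hd)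
  have hc2 : ∀ᶠ i in l, c i < 2 := hc.eventually_lt_const one_lt_two
  have hcδ : ∀ᶠ i in l, (2 - δ) * c i < 2 := by
    refine (hc.const_mul (2 - δ)).eventually_lt_const ?_
    linarith
  filter_upwards [hpy, hyq, hc2, hcδ] with i hpi hqi hci hcδi
  by_contra! hfar
  rw [dist_eq_norm, norm_sub_rev] at hfar
  rw [dist_eq_norm] at hpi hqi
  have hsum : (p - y i) + (y i - q) = p - q := sub_add_sub_cancel p (y i) q
  have hdiff : (p - y i) - (y i - q) = (2 : ℝ) • (midpoint ℝ p q - y i) := by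
    rw [midpoint_eq_smul_add, invOf_eq_inv]; module
  have h := huc (c i * (dist p q / 2)) hpi hqi <| by
    rw [hdiff, norm_smul, Real.norm_two]
    calc ε / dist p q * (c i * (dist p q / 2)) = ε * c i / 2 := by field_simp
      _ ≤ 2 * ‖midpoint ℝ p q - y i‖ := by nlinarith
  rw [hsum, ← dist_eq_norm] at h
  nlinarith

end UniformConvex

noncomputable def asymptoticRadius {α : Type*} [PseudoMetricSpace α] (x : ℕ → α) (w : α) : ℝ :=
  limsup (fun n => dist (x n) w) atTop

namespace asymptoticRadius

section PseudoMetric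

variable {α : Type*} [PseudoMetricSpace α] {x : ℕ → α}

theorem isBoundedUnder (hx : Bornology.IsBounded (range x)) (w : α) :
    IsBoundedUnder (· ≤ ·) atTop (fun n => dist (x n) w) := by
  obtain ⟨R, hR⟩ := (Metric.isBounded_iff_subset_closedBall w).1 hx
  exact isBoundedUnder_of ⟨R, fun n => hR (mem_range_self n)⟩

theorem nonneg (hx : Bornology.IsBounded (range x)) (w : α) : 0 ≤ asymptoticRadius x w :=
  le_limsup_of_frequently_le (Frequently.of_forall fun _ => dist_nonneg) (isBoundedUnder hx w)

theorem eventually_dist_lt (hx : Bornology.IsBounded (range x)) {w : α} {R : ℝ}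
    (h : asymptoticRadius x w < R) : ∀ᶠ n in atTop, dist (x n) w < R :=
  eventually_lt_of_limsup_lt h (isBoundedUnder hx w)

theorem le_of_eventually_le {w : α} {R : ℝ} (h : ∀ᶠ n in atTop, dist (x n) w ≤ R) :
    asymptoticRadius x w ≤ R :=
  limsup_le_of_le (isCoboundedUnder_le_of_le atTop fun _ => dist_nonneg) h

theorem le_const_mul (hx : Bornology.IsBounded (range x)) {a b : α} {K : ℝ} (hK : 0 ≤ K)
    {m : ℕ} (h : ∀ n, dist (x (n + m)) a ≤ K * dist (x n) b) :
    asymptoticRadius x a ≤ K * asymptoticRadius x b := by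
  refine ge_of_tendsto ((continuous_const_mul K).tendsto _ |>.mono_left nhdsWithin_le_nhds)
    (eventually_nhdsWithin_of_forall (s := Ioi (asymptoticRadius x b)) fun R hR => ?_)
  rw [asymptoticRadius, ← limsup_nat_add _ m]
  refine limsup_le_of_le (isCoboundedUnder_le_of_le atTop fun _ => dist_nonneg) ?_
  filter_upwards [eventually_dist_lt hx hR] with n hn
  exact (h n).trans (mul_le_mul_of_nonneg_left hn.le hK)

theorem le_add_dist (hx : Bornology.IsBounded (range x)) (a b : α) :
    asymptoticRadius x a ≤ asymptoticRadius x b + dist a b := by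
  refine le_of_forall_pos_le_add fun t ht => le_of_eventually_le ?_
  filter_upwards [eventually_dist_lt hx (lt_add_of_pos_right (asymptoticRadius x b) ht)] with n hn
  linarith [dist_triangle (x n) b a, dist_comm a b]

theorem lipschitzWith (hx : Bornology.IsBounded (range x)) :
    LipschitzWith 1 (asymptoticRadius x) :=
  LipschitzWith.of_le_add (le_add_dist hx)

theorem dist_le_add (hx : Bornology.IsBounded (range x)) (a b : α) :
    dist a b ≤ asymptoticRadius x a + asymptoticRadius x b := by
  refine le_of_forall_pos_lt_add fun t ht => ?_
  obtain ⟨n, hna, hnb⟩ :=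
    ((eventually_dist_lt hx (lt_add_of_pos_right (asymptoticRadius x a) (half_pos ht))).and
      (eventually_dist_lt hx (lt_add_of_pos_right (asymptoticRadius x b) (half_pos ht)))).exists
  linarith [dist_triangle_left a b (x n)]

end PseudoMetric

section UniformConvex

variable {E : Type*} [NormedAddCommGroup E] [NormedSpace ℝ E] [UniformConvexSpace E] {x : ℕ → E}

theorem exists_pos_midpoint_le (hx : Bornology.IsBounded (range x)) {ε : ℝ} (hε : 0 < ε) :
    ∃ δ > 0, ∀ (R : ℝ) (u v : E), asymptoticRadius x u < R → asymptoticRadius x v < R →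
      ε * R ≤ dist u v → asymptoticRadius x (midpoint ℝ u v) ≤ (1 - δ / 2) * R := by
  obtain ⟨δ, hδ, huc⟩ := exists_forall_norm_add_le_two_sub_mul (E := E) hε
  refine ⟨δ, hδ, fun R u v hu hv huv => le_of_eventually_le ?_⟩
  filter_upwards [eventually_dist_lt hx hu, eventually_dist_lt hx hv] with n hun hvn
  rw [dist_eq_norm] at hun hvn ⊢
  have hdiff : (x n - u) - (x n - v) = v - u := sub_sub_sub_cancel_left u v (x n)
  have hsum : (x n - u) + (x n - v) = (2 : ℝ) • (x n - midpoint ℝ u v) := by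
    rw [midpoint_eq_smul_add, invOf_eq_inv]; module
  have h := huc R hun.le hvn.le (by rwa [hdiff, ← dist_eq_norm, dist_comm])
  rw [hsum, norm_smul, Real.norm_two] at h
  linarith

theorem exists_pos_dist_le (hx : Bornology.IsBounded (range x)) {ε : ℝ} (hε : 0 < ε) (r₀ : ℝ) :
    ∃ η > 0, ∀ u v : E, asymptoticRadius x u ≤ r₀ + η → asymptoticRadius x v ≤ r₀ + η →
      r₀ ≤ asymptoticRadius x (midpoint ℝ u v) → dist u v ≤ ε := by
  rcases le_or_gt r₀ (ε / 4) with hsmall | hr₀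
  · exact ⟨ε / 4, by positivity, fun u v hu hv _ => (dist_le_add hx u v).trans (by linarith)⟩
  have hr₀pos : 0 < r₀ := by linarith
  obtain ⟨δ, hδ, hmid⟩ := exists_pos_midpoint_le hx (ε := ε / (2 * r₀)) (by positivity)
  -- `η` is small enough that `(1 - δ / 2) * (r₀ + 2 * η) < r₀`.
  set η := min (r₀ / 2) (δ * r₀ / 8)
  have hη : 0 < η := by positivity
  have hη₁ : η ≤ r₀ / 2 := min_le_left _ _
  have hη₂ : η ≤ δ * r₀ / 8 := min_le_right _ _
  refine ⟨η, hη, fun u v hu hv hm => ?_⟩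
  by_contra! huv
  have hR : ε / (2 * r₀) * (r₀ + 2 * η) ≤ dist u v := by
    refine le_trans ?_ huv.le
    rw [div_mul_eq_mul_div, div_le_iff₀ (by positivity)]
    nlinarith
  have h := hmid (r₀ + 2 * η) u v (by linarith) (by linarith) hR
  nlinarith

theorem tendsto_dist_zero_of_minimizing (hx : Bornology.IsBounded (range x)) {C : Set E}
    (hC : Convex ℝ C) {r₀ : ℝ} (hr₀ : ∀ w ∈ C, r₀ ≤ asymptoticRadius x w) {ι : Type*} {l : Filter ι}
    {u v : ι → E} (hu : ∀ i, u i ∈ C) (hv : ∀ i, v i ∈ C)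
    (hru : Tendsto (fun i => asymptoticRadius x (u i)) l (𝓝 r₀))
    (hrv : Tendsto (fun i => asymptoticRadius x (v i)) l (𝓝 r₀)) :
    Tendsto (fun i => dist (u i) (v i)) l (𝓝 0) := by
  rw [Metric.tendsto_nhds]
  intro ε hε
  obtain ⟨η, hη, hclose⟩ := exists_pos_dist_le hx (half_pos hε) r₀
  filter_upwards [hru.eventually (ge_mem_nhds (lt_add_of_pos_right r₀ hη)),
    hrv.eventually (ge_mem_nhds (lt_add_of_pos_right r₀ hη))] with i hui hvi
  rw [Real.dist_0_eq_abs, abs_of_nonneg dist_nonneg]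
  exact (hclose _ _ hui hvi (hr₀ _ (hC.midpoint_mem (hu i) (hv i)))).trans_lt (half_lt_self hε)

theorem exists_isMinOn [CompleteSpace E] (hx : Bornology.IsBounded (range x)) {C : Set E}
    (hC : Convex ℝ C) (hCcl : IsClosed C) (hCne : C.Nonempty) :
    ∃ z ∈ C, IsMinOn (asymptoticRadius x) C z := by
  set r₀ := sInf (asymptoticRadius x '' C)
  have hbdd : BddBelow (asymptoticRadius x '' C) :=
    ⟨0, by rintro _ ⟨w, -, rfl⟩; exact nonneg hx w⟩
  have hr₀ : ∀ w ∈ C, r₀ ≤ asymptoticRadius x w := fun w hw =>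
    csInf_le hbdd (mem_image_of_mem _ hw)
  obtain ⟨s, -, hs, hsC⟩ := exists_seq_tendsto_sInf (hCne.image (asymptoticRadius x)) hbdd
  choose u huC hus using hsC
  have hru : Tendsto (fun n => asymptoticRadius x (u n)) atTop (𝓝 r₀) := by
    simpa only [hus] using hs
  have hcauchy : CauchySeq u := by
    rw [cauchySeq_iff_tendsto_dist_atTop_0, ← prod_atTop_atTop_eq]
    exact tendsto_dist_zero_of_minimizing hx hC hr₀ (fun n => huC n.1) (fun n => huC n.2)
      (hru.comp tendsto_fst) (hru.comp tendsto_snd)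
  obtain ⟨z, hz⟩ := cauchySeq_tendsto_of_complete hcauchy
  have hrz : asymptoticRadius x z = r₀ :=
    tendsto_nhds_unique (((lipschitzWith hx).continuous.tendsto z).comp hz) hru
  exact ⟨z, hCcl.mem_of_tendsto hz (Eventually.of_forall huC), fun w hw => hrz ▸ hr₀ w hw⟩

end UniformConvex

end asymptoticRadius

section AsymptoticallyNonexpansive

variable {E : Type*} [NormedAddCommGroup E] [NormedSpace ℝ E] [UniformConvexSpace E]
  {C : Set E} {T : E → E} {k : ℕ → ℝ}

theorem exists_mem_tendsto_iterate_self [CompleteSpace E] (hCne : C.Nonempty)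
    (hCb : Bornology.IsBounded C) (hCcl : IsClosed C) (hCcv : Convex ℝ C) (hTmaps : MapsTo T C C)
    (hklim : Tendsto k atTop (𝓝 1))
    (hTan : ∀ n, 1 ≤ n → ∀ y ∈ C, ∀ z ∈ C, ‖T^[n] y - T^[n] z‖ ≤ k n * ‖y - z‖) :
    ∃ z ∈ C, Tendsto (fun n => T^[n] z) atTop (𝓝 z) := by
  obtain ⟨x₀, hx₀⟩ := hCne
  set x : ℕ → E := fun n => T^[n] x₀
  have hx : Bornology.IsBounded (range x) :=
    hCb.subset (range_subset_iff.2 fun n => hTmaps.iterate n hx₀)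
  obtain ⟨z, hz, hmin⟩ := asymptoticRadius.exists_isMinOn hx hCcv hCcl ⟨x₀, hx₀⟩
  have hle : ∀ᶠ m in atTop, asymptoticRadius x (T^[m] z) ≤ k m * asymptoticRadius x z := by
    filter_upwards [eventually_ge_atTop 1, hklim.eventually (eventually_ge_nhds zero_lt_one)]
      with m hm hkm
    refine asymptoticRadius.le_const_mul hx hkm (m := m) fun n => ?_
    rw [dist_eq_norm, dist_eq_norm, add_comm]
    simp only [x, Function.iterate_add_apply]
    exact hTan m hm _ (hTmaps.iterate n hx₀) _ hz
  have hr : Tendsto (fun m => asymptoticRadius x (T^[m] z)) atTop (𝓝 (asymptoticRadius x z)) :=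
    tendsto_of_tendsto_of_tendsto_of_le_of_le' tendsto_const_nhds
      (by simpa using hklim.mul_const (asymptoticRadius x z))
      (Eventually.of_forall fun m => hmin (hTmaps.iterate m hz)) hle
  exact ⟨z, hz, tendsto_iff_dist_tendsto_zero.2 <|
    asymptoticRadius.tendsto_dist_zero_of_minimizing hx hCcv (fun w hw => hmin hw)
      (fun m => hTmaps.iterate m hz) (fun _ => hz) hr tendsto_const_nhds⟩

theorem tendsto_iterate_midpoint (hklim : Tendsto k atTop (𝓝 1))
    (hTan : ∀ n, 1 ≤ n → ∀ y ∈ C, ∀ z ∈ C, ‖T^[n] y - T^[n] z‖ ≤ k n * ‖y - z‖)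
    {p q : E} (hp : p ∈ C) (hq : q ∈ C) (hpT : T p = p) (hqT : T q = q)
    (hm : midpoint ℝ p q ∈ C) :
    Tendsto (fun n => T^[n] (midpoint ℝ p q)) atTop (𝓝 (midpoint ℝ p q)) := by
  refine tendsto_midpoint_of_dist_le hklim ?_ ?_ <;>
    filter_upwards [eventually_ge_atTop 1] with n hn
  · have h := hTan n hn p hp _ hm
    rwa [Function.iterate_fixed hpT, ← dist_eq_norm, ← dist_eq_norm, dist_left_midpoint,
      Real.norm_two, inv_mul_eq_div] at h
  · have h := hTan n hn _ hm q hq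
    rwa [Function.iterate_fixed hqT, ← dist_eq_norm, ← dist_eq_norm, dist_midpoint_right,
      Real.norm_two, inv_mul_eq_div] at h

end AsymptoticallyNonexpansive

theorem fixedPointSet_nonempty_closed_convex_general
    (E : Type*) [NormedAddCommGroup E] [NormedSpace ℝ E] [CompleteSpace E]
    [UniformConvexSpace E]
    (C : Set E) (hCne : C.Nonempty) (hCb : Bornology.IsBounded C)
    (hCcl : IsClosed C) (hCcv : Convex ℝ C)
    (T : E → E) (hTmaps : Set.MapsTo T C C)
    (k : ℕ → ℝ)
    (hklim : Filter.Tendsto k Filter.atTop (nhds 1))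
    (hTan : ∀ n, 1 ≤ n → ∀ y ∈ C, ∀ z ∈ C,
      ‖T^[n] y - T^[n] z‖ ≤ k n * ‖y - z‖) :
    {z ∈ C | T z = z}.Nonempty ∧ IsClosed {z ∈ C | T z = z} ∧
      Convex ℝ {z ∈ C | T z = z} ∧ {z ∈ C | T z = z} ⊆ C := by
  have hTcont : ContinuousOn T C :=
    (LipschitzOnWith.of_dist_le' (K := k 1) fun y hy z hz => by
      simpa only [dist_eq_norm, Function.iterate_one] using hTan 1 le_rfl y hy z hz).continuousOn
  have hfix : ∀ z ∈ C, Tendsto (fun n => T^[n] z) atTop (𝓝 z) → T z = z := fun z hz h =>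
    isFixedPt_of_tendsto_iterate_of_continuousWithinAt h (fun n => hTmaps.iterate n hz)
      (hTcont z hz)
  have hclosed : IsClosed {z ∈ C | T z = z} := hCcl.isClosed_eq hTcont continuousOn_id
  refine ⟨?_, hclosed, hclosed.convex_of_midpoint_mem ?_, sep_subset _ _⟩
  · obtain ⟨z, hz, hlim⟩ := exists_mem_tendsto_iterate_self hCne hCb hCcl hCcv hTmaps hklim hTan
    exact ⟨z, hz, hfix z hz hlim⟩
  · rintro p ⟨hp, hpT⟩ q ⟨hq, hqT⟩
    have hm := hCcv.midpoint_mem hp hq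
    exact ⟨hm, hfix _ hm (tendsto_iterate_midpoint hklim hTan hp hq hpT hqT hm)⟩

/-- **(Goebel–Kirk).** Let `C` be a nonempty bounded closed convex subset of a
uniformly convex Banach space `E` and let `T : C → C` be an asymptotically
nonexpansive mapping. Then the fixed point set `F(T) = {x ∈ C : T x = x}` is a
nonempty, closed and convex subset of `C`. -/
theorem fixedPointSet_nonempty_closed_convex
    (E : Type*) [NormedAddCommGroup E] [NormedSpace ℝ E] [CompleteSpace E]
    [UniformConvexSpace E]
    (C : Set E) (hCne : C.Nonempty) (hCb : Bornology.IsBounded C)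
    (hCcl : IsClosed C) (hCcv : Convex ℝ C)
    (T : E → E) (hTmaps : Set.MapsTo T C C)
    (k : ℕ → ℝ) (hk : ∀ n, 1 ≤ n → 1 ≤ k n)
    (hklim : Filter.Tendsto k Filter.atTop (nhds 1))
    (hTan : ∀ n, 1 ≤ n → ∀ y ∈ C, ∀ z ∈ C,
      ‖T^[n] y - T^[n] z‖ ≤ k n * ‖y - z‖) :
    {z ∈ C | T z = z}.Nonempty ∧ IsClosed {z ∈ C | T z = z} ∧
      Convex ℝ {z ∈ C | T z = z} ∧ {z ∈ C | T z = z} ⊆ C :=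
  fixedPointSet_nonempty_closed_convex_general E C hCne hCb hCcl hCcv T hTmaps k hklim hTan
end

section
/- Let C be a nonempty closed convex subset of a reflexive, strictly convex and smooth Banach space E, let x ∈ E and u ∈ C, and let j(x − u) denote the unique norming functional of x − u. Then ‖u − x‖ = min_{y ∈ C} ‖y − x‖ if and only if j(x − u)(u − y) ≥ 0 for all y ∈ C. -/
/-!
If `u` is a nearest point of `C` to `x`, the open ball `B(x, ‖x - u‖)` misses `C`, so Hahn–Banach
gives a functional `f` with `f < c` on the ball and `c ≤ f` on `C`. Since `sup_B f = f x + ‖f‖ ‖x - u‖`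
and `u` lies on the boundary of the ball, `-f` attains its norm at `x - u` and `f u = c`; rescaled,
`-f` is a norming functional of `x - u` that is nonnegative on `u - C`, hence equals `j (x - u)` by
smoothness. Conversely, `‖x - u‖² = j (x - u) (x - y) - j (x - u) (u - y) ≤ ‖x - u‖ ‖x - y‖`.
-/

open Metric

section

variable {E : Type*} [NormedAddCommGroup E] [NormedSpace ℝ E]

theorem ContinuousLinearMap.apply_add_opNorm_mul_le_of_forall_mem_ball_lt
    {f : E →L[ℝ] ℝ} {x : E} {r c : ℝ} (hr : 0 < r) (hf : ∀ b ∈ ball x r, f b < c) :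
    f x + ‖f‖ * r ≤ c := by
  have hclosed : ∀ b ∈ closedBall x r, f b ≤ c := by
    rw [← closure_ball x hr.ne']
    exact closure_minimal (fun b hb => (hf b hb).le) (isClosed_le f.continuous continuous_const)
  have hbound : ∀ v ∈ closedBall (0 : E) r, ‖f v‖ ≤ c - f x := by
    intro v hv
    have hv' : ‖v‖ ≤ r := mem_closedBall_zero_iff.1 hv
    have hplus := hclosed (x + v) (by simpa [dist_eq_norm] using hv')
    have hminus := hclosed (x - v) (by simpa [dist_eq_norm] using hv')
    rw [map_add] at hplus
    rw [map_sub] at hminus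
    rw [Real.norm_eq_abs, abs_le]
    constructor <;> linarith
  have := f.opNorm_bound_of_ball_bound hr _ hbound
  rw [le_div_iff₀ hr] at this
  linarith

theorem exists_norming_functional_of_forall_norm_sub_le {C : Set E} (hC : Convex ℝ C)
    {x u : E} (hu : u ∈ C) (hmin : ∀ y ∈ C, ‖u - x‖ ≤ ‖y - x‖) :
    ∃ g : E →L[ℝ] ℝ, ‖g‖ = ‖x - u‖ ∧ g (x - u) = ‖x - u‖ ^ 2 ∧ ∀ y ∈ C, 0 ≤ g (u - y) := by
  rcases eq_or_ne x u with rfl | hxu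
  · exact ⟨0, by simp⟩
  set d := ‖x - u‖ with hd_def
  have hd : 0 < d := norm_pos_iff.2 (sub_ne_zero.2 hxu)
  have hdisj : Disjoint (ball x d) C := by
    refine Set.disjoint_left.2 fun y hy hyC => ?_
    rw [mem_ball, dist_eq_norm] at hy
    have := hmin y hyC
    rw [norm_sub_rev u x] at this
    linarith
  obtain ⟨f, c, hball, hCf⟩ := geometric_hahn_banach_open (convex_ball x d) isOpen_ball hC hdisj
  have hsup : f x + ‖f‖ * d ≤ c := f.apply_add_opNorm_mul_le_of_forall_mem_ball_lt hd hball
  have hcu : c ≤ f u := hCf u hu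
  have hle : f u - f x ≤ ‖f‖ * d := by
    rw [← map_sub, hd_def, ← norm_sub_rev u x]
    exact (le_abs_self _).trans (f.le_opNorm _)
  have hattain : f u - f x = ‖f‖ * d := by linarith
  have hf : 0 < ‖f‖ := pos_of_mul_pos_left (by linarith [hball x (mem_ball_self hd)]) hd.le
  have happly : ∀ v w : E, ((d / ‖f‖) • -f) (v - w) = d / ‖f‖ * (f w - f v) := fun v w => by
    simp only [smul_apply, neg_apply, map_sub, smul_eq_mul]
    ring
  refine ⟨(d / ‖f‖) • -f, ?_, ?_, fun y hy => ?_⟩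
  · rw [norm_smul, norm_neg, Real.norm_of_nonneg (by positivity), div_mul_cancel₀ _ hf.ne']
  · rw [happly, hattain]
    field_simp
  · rw [happly]
    exact mul_nonneg (by positivity) (by linarith [hCf y hy])

theorem norm_sub_le_norm_sub_of_norming_functional_nonneg {g : E →L[ℝ] ℝ} {x u y : E}
    (hg : ‖g‖ ≤ ‖x - u‖) (hgxu : g (x - u) = ‖x - u‖ ^ 2) (hy : 0 ≤ g (u - y)) :
    ‖u - x‖ ≤ ‖y - x‖ := by
  rw [norm_sub_rev u x, norm_sub_rev y x]
  have key : ‖x - u‖ * ‖x - u‖ ≤ ‖x - u‖ * ‖x - y‖ :=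
    calc ‖x - u‖ * ‖x - u‖ = g (x - y) - g (u - y) := by
          rw [← map_sub, sub_sub_sub_cancel_right, hgxu, sq]
      _ ≤ g (x - y) := sub_le_self _ hy
      _ ≤ ‖g‖ * ‖x - y‖ := (le_abs_self _).trans (g.le_opNorm _)
      _ ≤ ‖x - u‖ * ‖x - y‖ := by gcongr
  rcases (norm_nonneg (x - u)).eq_or_lt with h0 | hpos
  · rw [← h0]; exact norm_nonneg _
  · exact le_of_mul_le_mul_left key hpos

end

theorem nearest_point_iff_norming_functional_general
    (E : Type*) [NormedAddCommGroup E] [NormedSpace ℝ E]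
    (j : E → E →L[ℝ] ℝ)
    (hj0 : j 0 = 0)
    (hjnorm : ∀ y : E, y ≠ 0 → ‖j y‖ = ‖y‖)
    (hjval : ∀ y : E, (j y) y = ‖y‖ ^ 2)
    (hjuniq : ∀ y : E, y ≠ 0 → ∀ f : E →L[ℝ] ℝ, ‖f‖ = ‖y‖ → f y = ‖y‖ ^ 2 →
      f = j y)
    (C : Set E) (hCcv : Convex ℝ C)
    (x : E) (u : E) (hu : u ∈ C) :
    (∀ y ∈ C, ‖u - x‖ ≤ ‖y - x‖) ↔ (∀ y ∈ C, 0 ≤ (j (x - u)) (u - y)) := by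
  rcases eq_or_ne x u with rfl | hxu
  · simp [hj0]
  have hz : x - u ≠ 0 := sub_ne_zero.2 hxu
  refine ⟨fun hmin => ?_, fun hvar y hy => ?_⟩
  · obtain ⟨g, hg, hgz, hgC⟩ := exists_norming_functional_of_forall_norm_sub_le hCcv hu hmin
    rwa [← hjuniq _ hz g hg hgz]
  · exact norm_sub_le_norm_sub_of_norming_functional_nonneg (hjnorm _ hz).le (hjval _) (hvar y hy)

/-- **Characterization of the metric projection (2.1).**
Let `C` be a nonempty closed convex subset of a reflexive, strictly convex and
smooth Banach space `E`, let `x ∈ E` and `u ∈ C`, and let `j (x - u)` be the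
unique norming functional of `x - u`. Then `‖u - x‖ = min_{y ∈ C} ‖y - x‖` if
and only if `⟨u - y, j (x - u)⟩ ≥ 0` for all `y ∈ C`. -/
theorem nearest_point_iff_norming_functional
    (E : Type*) [NormedAddCommGroup E] [NormedSpace ℝ E] [CompleteSpace E]
    [StrictConvexSpace ℝ E]
    (hrefl : Function.Surjective (NormedSpace.inclusionInDoubleDual ℝ E))
    (j : E → E →L[ℝ] ℝ)
    (hj0 : j 0 = 0)
    (hjnorm : ∀ y : E, y ≠ 0 → ‖j y‖ = ‖y‖)
    (hjval : ∀ y : E, (j y) y = ‖y‖ ^ 2)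
    (hjuniq : ∀ y : E, y ≠ 0 → ∀ f : E →L[ℝ] ℝ, ‖f‖ = ‖y‖ → f y = ‖y‖ ^ 2 →
      f = j y)
    (C : Set E) (hCne : C.Nonempty) (hCcl : IsClosed C) (hCcv : Convex ℝ C)
    (x : E) (u : E) (hu : u ∈ C) :
    (∀ y ∈ C, ‖u - x‖ ≤ ‖y - x‖) ↔ (∀ y ∈ C, 0 ≤ (j (x - u)) (u - y)) :=
  nearest_point_iff_norming_functional_general E j hj0 hjnorm hjval hjuniq C hCcv x u hu
end

section
/- In the Setup, with E additionally assumed reflexive and strictly convex (which follows from uniform convexity) and F(T) = {z ∈ C : Tz = z} assumed nonempty, the iterative algorithm is well-defined: for every n ≥ 1, the set C_n ∩ D_n is a closed convex set containing F(T) (in particular nonempty), and hence the nearest point x_{n+1} to x in C_n ∩ D_n exists and is unique. -/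
/-!
`C_n` is a closed convex hull and `D_n` is cut out of `C` by closed half-spaces, so `C_n ∩ D_n` is
closed and convex. A fixed point `z` of `T` has `‖z - Tⁿ z‖ = 0`, so it stays in every `C_n`. It
stays in `D_{n+1}` by the variational inequality `j(x - x_{n+1})(x_{n+1} - z) ≥ 0` for the nearest
point `x_{n+1}` of the convex set `C_n ∩ D_n ∋ z`: separating the ball `B(x, ‖x - x_{n+1}‖)` from
`C_n ∩ D_n` yields a norming functional of `x - x_{n+1}` that is maximal on `C_n ∩ D_n` at
`x_{n+1}`, and smoothness identifies it with `j(x - x_{n+1})`. So `C_n ∩ D_n` is nonempty; nearest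
points exist because uniform convexity makes minimising sequences Cauchy, and are unique by strict
convexity.
-/

open Set Metric Filter

section NearestPoint

variable {E : Type*} [NormedAddCommGroup E] [NormedSpace ℝ E] {K : Set E} {x p q : E}

lemma Convex.eq_of_isMinOn_norm_sub [StrictConvexSpace ℝ E] (hK : Convex ℝ K)
    (hp : p ∈ K) (hq : q ∈ K) (hpmin : IsMinOn (‖x - ·‖) K p)
    (hqmin : IsMinOn (‖x - ·‖) K q) : p = q := by
  have heq : ‖x - p‖ = ‖x - q‖ := le_antisymm (isMinOn_iff.1 hpmin q hq) (isMinOn_iff.1 hqmin p hp)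
  by_contra hpq
  have hmid : (1 / 2 : ℝ) • p + (1 / 2 : ℝ) • q ∈ K :=
    hK hp hq (by norm_num) (by norm_num) (by norm_num)
  have hlt : ‖(1 / 2 : ℝ) • ((x - p) + (x - q))‖ < ‖x - p‖ :=
    (norm_midpoint_lt_iff heq).2 fun h => hpq (sub_right_injective h)
  have hx : (1 / 2 : ℝ) • ((x - p) + (x - q)) = x - ((1 / 2 : ℝ) • p + (1 / 2 : ℝ) • q) := by
    module
  exact (isMinOn_iff.1 hpmin _ hmid).not_gt (hx ▸ hlt)

lemma exists_pos_forall_norm_add_le_two_sub_mul [UniformConvexSpace E] {ε R : ℝ}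
    (hε : 0 < ε) (hR : 0 < R) :
    ∃ δ > 0, ∀ r, 0 < r → r ≤ R → ∀ a b : E, ‖a‖ ≤ r → ‖b‖ ≤ r → ε ≤ ‖a - b‖ →
      ‖a + b‖ ≤ (2 - δ) * r := by
  obtain ⟨δ, hδ, hball⟩ := exists_forall_closed_ball_dist_add_le_two_sub E (div_pos hε hR)
  refine ⟨δ, hδ, fun r hr hrR a b ha hb hab => ?_⟩
  have hscale : ∀ c : E, ‖r⁻¹ • c‖ = ‖c‖ / r := fun c => by
    rw [norm_smul_of_nonneg (inv_nonneg.2 hr.le), inv_mul_eq_div]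
  have h := @hball (r⁻¹ • a) (by rw [hscale, div_le_one hr]; exact ha) (r⁻¹ • b)
    (by rw [hscale, div_le_one hr]; exact hb)
    (by rw [← smul_sub, hscale]; exact (div_le_div_of_nonneg_left hε.le hr hrR).trans
          (div_le_div_of_nonneg_right hab hr.le))
  rwa [← smul_add, hscale, div_le_iff₀ hr] at h

lemma Convex.exists_pos_dist_lt_of_dist_le_infDist_add [UniformConvexSpace E] (hK : Convex ℝ K)
    (hd : 0 < infDist x K) {ε : ℝ} (hε : 0 < ε) :
    ∃ η > 0, ∀ y ∈ K, ∀ z ∈ K, dist x y ≤ infDist x K + η → dist x z ≤ infDist x K + η →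
      dist y z < ε := by
  set d := infDist x K
  obtain ⟨δ, hδ, hconv⟩ := exists_pos_forall_norm_add_le_two_sub_mul (E := E) hε
    (show 0 < d + 1 by linarith)
  set η := min 1 (δ * d / 4)
  have hη : 0 < η := by positivity
  refine ⟨η, hη, fun y hy z hz hyd hzd => ?_⟩
  -- the midpoint of `y` and `z` lies in `K`, so `2 d ≤ ‖(x - y) + (x - z)‖ ≤ (2 - δ) (d + η)`
  by_contra! hyz
  have hmid : d ≤ ‖x - ((1 / 2 : ℝ) • y + (1 / 2 : ℝ) • z)‖ := by
    rw [← dist_eq_norm]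
    exact infDist_le_dist_of_mem (hK hy hz (by norm_num) (by norm_num) (by norm_num))
  have hsum : (x - y) + (x - z) = (2 : ℝ) • (x - ((1 / 2 : ℝ) • y + (1 / 2 : ℝ) • z)) := by
    module
  have hupper := hconv (d + η) (by positivity) (by linarith [min_le_left 1 (δ * d / 4)])
    (x - y) (x - z) (by rwa [← dist_eq_norm]) (by rwa [← dist_eq_norm])
    (by rwa [sub_sub_sub_cancel_left, ← dist_eq_norm, dist_comm])
  rw [hsum, norm_smul, Real.norm_two] at hupper
  nlinarith [min_le_right 1 (δ * d / 4), mul_pos hδ hη, mul_pos hδ hd]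

lemma Convex.cauchySeq_of_tendsto_dist_infDist [UniformConvexSpace E] (hK : Convex ℝ K)
    (hd : 0 < infDist x K) {z : ℕ → E} (hzK : ∀ n, z n ∈ K)
    (hz : Tendsto (fun n => dist x (z n)) atTop (nhds (infDist x K))) : CauchySeq z := by
  refine Metric.cauchySeq_iff.2 fun ε hε => ?_
  obtain ⟨η, hη, hclose⟩ := hK.exists_pos_dist_lt_of_dist_le_infDist_add hd hε
  obtain ⟨N, hN⟩ := eventually_atTop.1 <|
    hz.eventually (eventually_le_nhds (lt_add_of_pos_right (infDist x K) hη))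
  exact ⟨N, fun m hm n hn => hclose _ (hzK m) _ (hzK n) (hN m hm) (hN n hn)⟩

lemma IsClosed.exists_isMinOn_norm_sub [CompleteSpace E] [UniformConvexSpace E]
    (hKc : IsClosed K) (hK : Convex ℝ K) (hne : K.Nonempty) (x : E) :
    ∃ p ∈ K, IsMinOn (‖x - ·‖) K p := by
  by_cases hx : x ∈ K
  · exact ⟨x, hx, fun z _ => by simp⟩
  have hd : 0 < infDist x K := (hKc.notMem_iff_infDist_pos hne).1 hx
  have happrox : ∀ n : ℕ, ∃ y ∈ K, dist x y < infDist x K + 1 / (n + 1) := fun n =>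
    (infDist_lt_iff hne).1 (lt_add_of_pos_right _ Nat.one_div_pos_of_nat)
  choose z hzK hzd using happrox
  have hz : Tendsto (fun n => dist x (z n)) atTop (nhds (infDist x K)) := by
    refine tendsto_of_tendsto_of_tendsto_of_le_of_le tendsto_const_nhds ?_
      (fun n => infDist_le_dist_of_mem (hzK n)) fun n => (hzd n).le
    simpa using tendsto_const_nhds.add (tendsto_one_div_add_atTop_nhds_zero_nat (𝕜 := ℝ))
  obtain ⟨p, hp⟩ := cauchySeq_tendsto_of_complete (hK.cauchySeq_of_tendsto_dist_infDist hd hzK hz)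
  have hdist : dist x p = infDist x K := tendsto_nhds_unique (tendsto_const_nhds.dist hp) hz
  refine ⟨p, hKc.mem_of_tendsto hp (Eventually.of_forall hzK), fun w hw => ?_⟩
  show ‖x - p‖ ≤ ‖x - w‖
  rw [← dist_eq_norm, ← dist_eq_norm, hdist]
  exact infDist_le_dist_of_mem hw


lemma ContinuousLinearMap.norm_le_div_of_forall_norm_le (f : E →L[ℝ] ℝ) {r M : ℝ} (hr : 0 < r)
    (hf : ∀ w, ‖w‖ ≤ r → f w ≤ M) : ‖f‖ ≤ M / r := by
  have hM : 0 ≤ M := by simpa using hf 0 (by simp [hr.le])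
  refine f.opNorm_le_of_unit_norm (by positivity) fun w hw => ?_
  have hplus := hf (r • w) (by simp [norm_smul, hw, abs_of_pos hr])
  have hminus := hf (-(r • w)) (by simp [norm_smul, hw, abs_of_pos hr])
  simp only [map_neg, map_smul, smul_eq_mul] at hplus hminus
  rw [Real.norm_eq_abs, le_div_iff₀ hr]
  cases abs_cases (f w) <;> nlinarith

lemma IsMinOn.exists_dual_vector_isMaxOn (hK : Convex ℝ K) (hp : p ∈ K)
    (hmin : IsMinOn (‖x - ·‖) K p) (hxp : x ≠ p) :
    ∃ g : E →L[ℝ] ℝ, ‖g‖ = 1 ∧ g (x - p) = ‖x - p‖ ∧ IsMaxOn g K p := by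
  set r := ‖x - p‖
  have hr : 0 < r := norm_pos_iff.2 (sub_ne_zero.2 hxp)
  have hdisj : Disjoint (ball x r) K := by
    refine disjoint_left.2 fun z hz hzK => (isMinOn_iff.1 hmin z hzK).not_gt ?_
    rwa [mem_ball, dist_comm, dist_eq_norm] at hz
  obtain ⟨f, s, hball, hK'⟩ := geometric_hahn_banach_open (convex_ball x r) isOpen_ball hK hdisj
  have hclosedBall : ∀ a ∈ closedBall x r, f a ≤ s := by
    rw [← closure_ball x hr.ne']
    exact (isClosed_le f.continuous continuous_const).closure_subset_iff.2 fun a ha =>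
      (hball a ha).le
  have hfp : f p = s :=
    le_antisymm (hclosedBall p (by rw [mem_closedBall, dist_comm, dist_eq_norm])) (hK' p hp)
  set m := f p - f x
  have hm : 0 < m := by linarith [hball x (mem_ball_self hr)]
  have hfnorm : ‖f‖ ≤ m / r := f.norm_le_div_of_forall_norm_le hr fun w hw => by
    have := hclosedBall (x + w) (by simpa using hw)
    rw [map_add] at this
    linarith
  set g := -(r / m) • f
  have hgx : g (x - p) = r := by
    simp only [g, smul_apply, map_sub, smul_eq_mul]
    field_simp
    ring
  have hg_le : ‖g‖ ≤ 1 := by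
    rw [norm_smul, Real.norm_eq_abs, abs_neg, abs_of_pos (by positivity)]
    calc r / m * ‖f‖ ≤ r / m * (m / r) := by gcongr
      _ = 1 := by field_simp
  have hg_ge : 1 ≤ ‖g‖ := by
    have := g.le_opNorm (x - p)
    rw [hgx, Real.norm_eq_abs, abs_of_pos hr] at this
    exact le_of_mul_le_mul_right (by linarith) hr
  refine ⟨g, le_antisymm hg_le hg_ge, hgx, fun z hz => ?_⟩
  simp only [mem_ofPred_eq, g, smul_apply, smul_eq_mul, neg_mul, neg_le_neg_iff]
  exact mul_le_mul_of_nonneg_left (hfp ▸ hK' z hz) (by positivity)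

lemma IsMinOn.duality_apply_sub_nonneg (j : E → E →L[ℝ] ℝ) (hj0 : j 0 = 0)
    (hjuniq : ∀ y : E, y ≠ 0 → ∀ f : E →L[ℝ] ℝ, ‖f‖ = ‖y‖ → f y = ‖y‖ ^ 2 → f = j y)
    (hK : Convex ℝ K) (hp : p ∈ K) (hmin : IsMinOn (‖x - ·‖) K p) {z : E} (hz : z ∈ K) :
    0 ≤ j (x - p) (p - z) := by
  obtain rfl | hxp := eq_or_ne x p
  · simp [hj0]
  obtain ⟨g, hg1, hgx, hgmax⟩ := hmin.exists_dual_vector_isMaxOn hK hp hxp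
  have hj : ‖x - p‖ • g = j (x - p) := by
    refine hjuniq _ (sub_ne_zero.2 hxp) _ ?_ ?_
    · rw [norm_smul, hg1, norm_norm, mul_one]
    · rw [smul_apply, hgx, smul_eq_mul, sq]
  rw [← hj, smul_apply, map_sub, smul_eq_mul]
  exact mul_nonneg (norm_nonneg _) (sub_nonneg.2 (isMaxOn_iff.1 hgmax z hz))

end NearestPoint

structure AlgState (E : Type*) where
  point : E
  setC : Set E
  setD : Set E

section Algorithm

variable {E : Type*} [NormedAddCommGroup E] [NormedSpace ℝ E]
  (j : E → E →L[ℝ] ℝ) (T : E → E) (t : ℕ → ℝ) (x : E)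

noncomputable def nearestPoint (K : Set E) : E :=
  Classical.epsilon fun p => p ∈ K ∧ IsMinOn (‖x - ·‖) K p

lemma nearestPoint_spec [CompleteSpace E] [UniformConvexSpace E] {K : Set E} (hKc : IsClosed K)
    (hK : Convex ℝ K) (hne : K.Nonempty) :
    nearestPoint x K ∈ K ∧ IsMinOn (‖x - ·‖) K (nearestPoint x K) :=
  Classical.epsilon_spec (hKc.exists_isMinOn_norm_sub hK hne x)

def nextC (n : ℕ) (y : E) (C' : Set E) : Set E :=
  closure (convexHull ℝ {z ∈ C' | ‖z - T^[n] z‖ ≤ t n * ‖y - T^[n] y‖})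

def nextD (y : E) (D' : Set E) : Set E :=
  {z ∈ D' | 0 ≤ j (x - y) (y - z)}

/-- `algState j T t x C n` consists of `x_{n+1}`, `C_n` and `D_n`. -/
noncomputable def algState (C : Set E) : ℕ → AlgState E
  | 0 => ⟨x, C, C⟩
  | n + 1 =>
    let s := algState C n
    ⟨nearestPoint x (nextC T t (n + 1) s.point s.setC ∩ nextD j x s.point s.setD),
      nextC T t (n + 1) s.point s.setC, nextD j x s.point s.setD⟩

variable {j T t x}

lemma isClosed_nextC (n : ℕ) (y : E) (C' : Set E) : IsClosed (nextC T t n y C') :=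
  isClosed_closure

lemma convex_nextC (n : ℕ) (y : E) (C' : Set E) : Convex ℝ (nextC T t n y C') :=
  (convex_convexHull ℝ _).closure

lemma mem_nextC_of_isFixedPt {n : ℕ} {y z : E} {C' : Set E} (hz : z ∈ C') (hTz : T z = z)
    (htn : 0 ≤ t n) : z ∈ nextC T t n y C' := by
  refine subset_closure (subset_convexHull ℝ _ ⟨hz, ?_⟩)
  rw [Function.iterate_fixed hTz, sub_self, norm_zero]
  positivity

lemma nextD_eq_inter_preimage (y : E) (D' : Set E) :
    nextD j x y D' = D' ∩ j (x - y) ⁻¹' Iic (j (x - y) y) := by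
  ext z
  simp [nextD, sub_nonneg]

lemma isClosed_nextD {y : E} {D' : Set E} (hD : IsClosed D') : IsClosed (nextD j x y D') := by
  rw [nextD_eq_inter_preimage]
  exact hD.inter (isClosed_Iic.preimage (j _).continuous)

lemma convex_nextD {y : E} {D' : Set E} (hD : Convex ℝ D') : Convex ℝ (nextD j x y D') := by
  rw [nextD_eq_inter_preimage]
  exact hD.inter ((convex_Iic _).linear_preimage (j _).toLinearMap)

variable {C : Set E}

lemma isClosed_algState_setC (hC : IsClosed C) : ∀ n, IsClosed (algState j T t x C n).setC
  | 0 => hC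
  | _ + 1 => isClosed_nextC _ _ _

lemma convex_algState_setC (hC : Convex ℝ C) : ∀ n, Convex ℝ (algState j T t x C n).setC
  | 0 => hC
  | _ + 1 => convex_nextC _ _ _

lemma isClosed_algState_setD (hC : IsClosed C) : ∀ n, IsClosed (algState j T t x C n).setD
  | 0 => hC
  | n + 1 => isClosed_nextD (isClosed_algState_setD hC n)

lemma convex_algState_setD (hC : Convex ℝ C) : ∀ n, Convex ℝ (algState j T t x C n).setD
  | 0 => hC
  | n + 1 => convex_nextD (convex_algState_setD hC n)

lemma algState_spec [CompleteSpace E] [UniformConvexSpace E] (hj0 : j 0 = 0)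
    (hjuniq : ∀ y : E, y ≠ 0 → ∀ f : E →L[ℝ] ℝ, ‖f‖ = ‖y‖ → f y = ‖y‖ ^ 2 → f = j y)
    (hCc : IsClosed C) (hC : Convex ℝ C) (ht : ∀ n, 0 ≤ t n) (hx : x ∈ C)
    (hF : {z ∈ C | T z = z}.Nonempty) (n : ℕ) :
    {z ∈ C | T z = z} ⊆ (algState j T t x C n).setC ∩ (algState j T t x C n).setD ∧
      (algState j T t x C n).point ∈ (algState j T t x C n).setC ∩ (algState j T t x C n).setD ∧
      IsMinOn (‖x - ·‖) ((algState j T t x C n).setC ∩ (algState j T t x C n).setD)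
        (algState j T t x C n).point := by
  induction n with
  | zero => exact ⟨fun z hz => ⟨hz.1, hz.1⟩, ⟨hx, hx⟩, fun z _ => by simp [algState]⟩
  | succ n ih =>
    obtain ⟨hFsub, hmem, hmin⟩ := ih
    have hFnext : {z ∈ C | T z = z} ⊆
        nextC T t (n + 1) (algState j T t x C n).point (algState j T t x C n).setC ∩
          nextD j x (algState j T t x C n).point (algState j T t x C n).setD := fun z hz =>
      ⟨mem_nextC_of_isFixedPt (hFsub hz).1 hz.2 (ht _),
        (hFsub hz).2, hmin.duality_apply_sub_nonneg j hj0 hjuniq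
          ((convex_algState_setC hC n).inter (convex_algState_setD hC n)) hmem (hFsub hz)⟩
    exact ⟨hFnext, nearestPoint_spec x
      ((isClosed_nextC _ _ _).inter (isClosed_nextD (isClosed_algState_setD hCc n)))
      ((convex_nextC _ _ _).inter (convex_nextD (convex_algState_setD hC n))) (hF.mono hFnext)⟩

end Algorithm

theorem algorithm_well_defined_general
    (E : Type*) [NormedAddCommGroup E] [NormedSpace ℝ E] [CompleteSpace E]
    [UniformConvexSpace E]
    -- smoothness: the (unique) duality/norming functional map `j`
    (j : E → E →L[ℝ] ℝ)
    (hj0 : j 0 = 0)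
    (hjuniq : ∀ y : E, y ≠ 0 → ∀ f : E →L[ℝ] ℝ, ‖f‖ = ‖y‖ → f y = ‖y‖ ^ 2 →
      f = j y)
    (C : Set E)
    (hCcl : IsClosed C) (hCcv : Convex ℝ C)
    (T : E → E)
    (t : ℕ → ℝ) (ht : ∀ n, t n ∈ Set.Ioo (0 : ℝ) 1)
    (x : E) (hx : x ∈ C)
    (hF : {z ∈ C | T z = z}.Nonempty) :
    ∃ (X : ℕ → E) (Cs Ds : ℕ → Set E),
      X 1 = x ∧ Cs 0 = C ∧ Ds 0 = C ∧
      (∀ n, 1 ≤ n → Cs n = closure (convexHull ℝ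
        {z ∈ Cs (n - 1) | ‖z - T^[n] z‖ ≤ t n * ‖X n - T^[n] (X n)‖})) ∧
      (∀ n, 1 ≤ n → Ds n = {z ∈ Ds (n - 1) | 0 ≤ (j (x - X n)) (X n - z)}) ∧
      (∀ n, 1 ≤ n →
        IsClosed (Cs n ∩ Ds n) ∧
        Convex ℝ (Cs n ∩ Ds n) ∧
        {z ∈ C | T z = z} ⊆ Cs n ∩ Ds n ∧
        X (n + 1) ∈ Cs n ∩ Ds n ∧
        (∀ z ∈ Cs n ∩ Ds n, ‖x - X (n + 1)‖ ≤ ‖x - z‖) ∧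
        (∀ y, y ∈ Cs n ∩ Ds n → (∀ z ∈ Cs n ∩ Ds n, ‖x - y‖ ≤ ‖x - z‖) →
          y = X (n + 1))) := by
  set A := algState j T t x C
  refine ⟨fun n => (A (n - 1)).point, fun n => (A n).setC, fun n => (A n).setD,
    rfl, rfl, rfl, ?_, ?_, fun n _ => ?_⟩
  · rintro (_ | n) hn
    exacts [absurd hn (by norm_num), rfl]
  · rintro (_ | n) hn
    exacts [absurd hn (by norm_num), rfl]
  obtain ⟨hFsub, hmem, hmin⟩ :=
    algState_spec hj0 hjuniq hCcl hCcv (fun n => (ht n).1.le) hx hF n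
  have hconv : Convex ℝ ((A n).setC ∩ (A n).setD) :=
    (convex_algState_setC hCcv n).inter (convex_algState_setD hCcv n)
  exact ⟨(isClosed_algState_setC hCcl n).inter (isClosed_algState_setD hCcl n), hconv, hFsub,
    hmem, isMinOn_iff.1 hmin,
    fun y hy hymin => hconv.eq_of_isMinOn_norm_sub hy hmem (isMinOn_iff.2 hymin) hmin⟩

/-- **Lemma 3.1 (well-definedness of the algorithm).**
In the Setup (E uniformly convex and smooth, additionally reflexive and
strictly convex; `C` nonempty bounded closed convex; `T : C → C`
asymptotically nonexpansive with sequence `(kₙ)`; `(tₙ) ⊆ (0,1)`, `tₙ → 0`;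
`x ∈ C`), if `F(T) ≠ ∅`, then there are sequences `(xₙ)`, `(Cₙ)`, `(Dₙ)`
satisfying the recursion, and for every `n ≥ 1` the set `Cₙ ∩ Dₙ` is closed,
convex and contains `F(T)`, and the point of `Cₙ ∩ Dₙ` nearest to `x` exists
and is unique (and equals `x_{n+1}`). -/
theorem algorithm_well_defined
    (E : Type*) [NormedAddCommGroup E] [NormedSpace ℝ E] [CompleteSpace E]
    [UniformConvexSpace E] [StrictConvexSpace ℝ E]
    (hrefl : Function.Surjective (NormedSpace.inclusionInDoubleDual ℝ E))
    -- smoothness: the (unique) duality/norming functional map `j`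
    (j : E → E →L[ℝ] ℝ)
    (hj0 : j 0 = 0)
    (hjnorm : ∀ y : E, y ≠ 0 → ‖j y‖ = ‖y‖)
    (hjval : ∀ y : E, (j y) y = ‖y‖ ^ 2)
    (hjuniq : ∀ y : E, y ≠ 0 → ∀ f : E →L[ℝ] ℝ, ‖f‖ = ‖y‖ → f y = ‖y‖ ^ 2 →
      f = j y)
    (C : Set E) (hCne : C.Nonempty) (hCb : Bornology.IsBounded C)
    (hCcl : IsClosed C) (hCcv : Convex ℝ C)
    (T : E → E) (hTmaps : Set.MapsTo T C C)
    (k : ℕ → ℝ) (hk : ∀ n, 1 ≤ n → 1 ≤ k n)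
    (hklim : Filter.Tendsto k Filter.atTop (nhds 1))
    (hTan : ∀ n, 1 ≤ n → ∀ y ∈ C, ∀ z ∈ C, ‖T^[n] y - T^[n] z‖ ≤ k n * ‖y - z‖)
    (t : ℕ → ℝ) (ht : ∀ n, t n ∈ Set.Ioo (0 : ℝ) 1)
    (htlim : Filter.Tendsto t Filter.atTop (nhds 0))
    (x : E) (hx : x ∈ C)
    (hF : {z ∈ C | T z = z}.Nonempty) :
    ∃ (X : ℕ → E) (Cs Ds : ℕ → Set E),
      X 1 = x ∧ Cs 0 = C ∧ Ds 0 = C ∧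
      (∀ n, 1 ≤ n → Cs n = closure (convexHull ℝ
        {z ∈ Cs (n - 1) | ‖z - T^[n] z‖ ≤ t n * ‖X n - T^[n] (X n)‖})) ∧
      (∀ n, 1 ≤ n → Ds n = {z ∈ Ds (n - 1) | 0 ≤ (j (x - X n)) (X n - z)}) ∧
      (∀ n, 1 ≤ n →
        IsClosed (Cs n ∩ Ds n) ∧
        Convex ℝ (Cs n ∩ Ds n) ∧
        {z ∈ C | T z = z} ⊆ Cs n ∩ Ds n ∧
        X (n + 1) ∈ Cs n ∩ Ds n ∧
        (∀ z ∈ Cs n ∩ Ds n, ‖x - X (n + 1)‖ ≤ ‖x - z‖) ∧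
        (∀ y, y ∈ Cs n ∩ Ds n → (∀ z ∈ Cs n ∩ Ds n, ‖x - y‖ ≤ ‖x - z‖) →
          y = X (n + 1))) :=
  algorithm_well_defined_general E j hj0 hjuniq C hCcl hCcv T t ht x hx hF
end

section
/- In the Setup, assume F(T) = {z ∈ C : Tz = z} is nonempty, let u be the unique point of F(T) nearest to x, and assume the sequence (x_n) generated by the algorithm is well-defined. Then ‖x − x_{n+1}‖ ≤ ‖x − u‖ for all n ≥ 1. -/
/-!
The fixed point `u` lies in every `C_n ∩ D_n`, so minimality of `x_(n+1)` gives the bound. It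
survives the `C_n`-step because its displacement `‖u - T^n u‖` is zero, and the `D_n`-step by the
variational inequality `j(x - v)(v - z) ≥ 0` for the nearest point `v` of a convex set `K` to `x`.
That inequality comes from separating `K` from the open ball of radius `‖x - v‖` around `x` by
Hahn–Banach: rescaled, the separating functional norms `x - v`, hence is `j(x - v)` by smoothness.
-/

section

open Metric

variable {E : Type*} [NormedAddCommGroup E] [NormedSpace ℝ E]

theorem exists_separating_functional_of_nearest {K : Set E} (hK : Convex ℝ K) {x v : E}
    (hv : v ∈ K) (hxv : x ≠ v) (hmin : ∀ z ∈ K, ‖x - v‖ ≤ ‖x - z‖) :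
    ∃ f : E →L[ℝ] ℝ, f ≠ 0 ∧ (∀ b ∈ closedBall x ‖x - v‖, f b ≤ f v) ∧ ∀ z ∈ K, f v ≤ f z := by
  have hr : 0 < ‖x - v‖ := norm_pos_iff.mpr (sub_ne_zero.mpr hxv)
  have hdisj : Disjoint (ball x ‖x - v‖) K := by
    refine Set.disjoint_left.mpr fun b hb hbK => ?_
    rw [mem_ball, dist_comm, dist_eq_norm] at hb
    exact (hmin b hbK).not_gt hb
  obtain ⟨f, s, hball, hKs⟩ := geometric_hahn_banach_open (convex_ball x _) isOpen_ball hK hdisj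
  have hclosedBall : ∀ b ∈ closedBall x ‖x - v‖, f b ≤ s := by
    rw [← closure_ball x hr.ne']
    exact closure_minimal (fun b hb => (hball b hb).le) (isClosed_le f.continuous continuous_const)
  have hsv : s = f v := le_antisymm (hKs v hv)
    (hclosedBall v (by rw [mem_closedBall, dist_comm, dist_eq_norm]))
  refine ⟨f, ?_, fun b hb => hsv ▸ hclosedBall b hb, fun z hz => hsv ▸ hKs z hz⟩
  rintro rfl
  simpa using (hball x (mem_ball_self hr)).trans_le (hKs v hv)

theorem exists_norming_functional_supporting_of_nearest {K : Set E} (hK : Convex ℝ K) {x v : E}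
    (hv : v ∈ K) (hxv : x ≠ v) (hmin : ∀ z ∈ K, ‖x - v‖ ≤ ‖x - z‖) :
    ∃ g : E →L[ℝ] ℝ, ‖g‖ = ‖x - v‖ ∧ g (x - v) = ‖x - v‖ ^ 2 ∧ ∀ z ∈ K, 0 ≤ g (v - z) := by
  obtain ⟨f, hf0, hball, hK⟩ := exists_separating_functional_of_nearest hK hv hxv hmin
  set r := ‖x - v‖
  have hr : 0 < r := norm_pos_iff.mpr (sub_ne_zero.mpr hxv)
  have hfpos : 0 < ‖f‖ := norm_pos_iff.mpr hf0
  have hbound : ‖f‖ ≤ f (v - x) / r := by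
    refine f.opNorm_bound_of_ball_bound hr _ fun d hd => ?_
    rw [mem_closedBall_zero_iff] at hd
    have hplus := hball (x + d) (by simpa [mem_closedBall, dist_eq_norm] using hd)
    have hminus := hball (x - d) (by simpa [mem_closedBall, dist_eq_norm] using hd)
    rw [map_add] at hplus
    rw [map_sub] at hminus ⊢
    rw [Real.norm_eq_abs, abs_le]
    constructor <;> linarith
  have hfvx : f (v - x) = ‖f‖ * r := by
    refine le_antisymm ?_ ((le_div_iff₀ hr).mp hbound)
    calc f (v - x) ≤ ‖f‖ * ‖v - x‖ := (le_abs_self _).trans (f.le_opNorm _)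
      _ = ‖f‖ * r := by rw [norm_sub_rev]
  refine ⟨(-(r / ‖f‖)) • f, ?_, ?_, fun z hz => ?_⟩
  · rw [norm_smul, norm_neg, Real.norm_of_nonneg (by positivity), div_mul_cancel₀ _ hfpos.ne']
  · rw [smul_apply, smul_eq_mul, ← neg_sub, map_neg, neg_mul_neg, hfvx]
    field_simp
  · rw [smul_apply, smul_eq_mul, ← neg_sub, map_neg, neg_mul_neg, map_sub]
    exact mul_nonneg (by positivity) (sub_nonneg.mpr (hK z hz))

theorem duality_map_apply_nonneg_of_nearest (j : E → E →L[ℝ] ℝ) (hj0 : j 0 = 0)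
    (hjuniq : ∀ y : E, y ≠ 0 → ∀ f : E →L[ℝ] ℝ, ‖f‖ = ‖y‖ → f y = ‖y‖ ^ 2 → f = j y)
    {K : Set E} (hK : Convex ℝ K) {x v : E} (hv : v ∈ K)
    (hmin : ∀ z ∈ K, ‖x - v‖ ≤ ‖x - z‖) {z : E} (hz : z ∈ K) :
    0 ≤ j (x - v) (v - z) := by
  rcases eq_or_ne x v with rfl | hxv
  · simp [hj0]
  obtain ⟨g, hgnorm, hgval, hgK⟩ := exists_norming_functional_supporting_of_nearest hK hv hxv hmin
  rw [← hjuniq _ (sub_ne_zero.mpr hxv) g hgnorm hgval]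
  exact hgK z hz

theorem convex_setOf_nonneg_apply_sub (f : E →L[ℝ] ℝ) (a : E) :
    Convex ℝ {z | 0 ≤ f (a - z)} := by
  simpa only [map_sub, sub_nonneg, ContinuousLinearMap.coe_coe] using
    convex_halfSpace_le f.toLinearMap.isLinear (f a)

end

theorem dist_le_dist_nearest_fixed_point_general
    (E : Type*) [NormedAddCommGroup E] [NormedSpace ℝ E]
    -- smoothness: the (unique) duality/norming functional map `j`
    (j : E → E →L[ℝ] ℝ)
    (hj0 : j 0 = 0)
    (hjuniq : ∀ y : E, y ≠ 0 → ∀ f : E →L[ℝ] ℝ, ‖f‖ = ‖y‖ → f y = ‖y‖ ^ 2 →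
      f = j y)
    (C : Set E) (hCcv : Convex ℝ C)
    (T : E → E)
    (t : ℕ → ℝ) (ht : ∀ n, t n ∈ Set.Ioo (0 : ℝ) 1)
    (x : E)
    -- the (well-defined) sequences generated by the algorithm
    (X : ℕ → E) (Cs Ds : ℕ → Set E)
    (hX1 : X 1 = x) (hCs0 : Cs 0 = C) (hDs0 : Ds 0 = C)
    (hCsrec : ∀ n, 1 ≤ n → Cs n = closure (convexHull ℝ
      {z ∈ Cs (n - 1) | ‖z - T^[n] z‖ ≤ t n * ‖X n - T^[n] (X n)‖}))
    (hDsrec : ∀ n, 1 ≤ n →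
      Ds n = {z ∈ Ds (n - 1) | 0 ≤ (j (x - X n)) (X n - z)})
    (hXmem : ∀ n, 1 ≤ n → X (n + 1) ∈ Cs n ∩ Ds n)
    (hXmin : ∀ n, 1 ≤ n → ∀ z ∈ Cs n ∩ Ds n, ‖x - X (n + 1)‖ ≤ ‖x - z‖)
    -- `u` is the (unique) point of `F(T)` nearest to `x`
    (u : E) (huC : u ∈ C) (huFix : T u = u) :
    ∀ n, 1 ≤ n → ‖x - X (n + 1)‖ ≤ ‖x - u‖ := by
  have hCs_convex : ∀ n, 1 ≤ n → Convex ℝ (Cs n) := fun n hn =>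
    hCsrec n hn ▸ (convex_convexHull ℝ _).closure
  have hDs_convex : ∀ n, Convex ℝ (Ds n) := by
    intro n
    induction n with
    | zero => rwa [hDs0]
    | succ m ih =>
      rw [hDsrec _ (Nat.le_add_left 1 m), Nat.add_sub_cancel, ← Set.inter_ofPred_eq_sep]
      exact ih.inter (convex_setOf_nonneg_apply_sub _ _)
  have hu : ∀ n, u ∈ Cs n ∩ Ds n := by
    intro n
    induction n with
    | zero => rw [hCs0, hDs0]; exact ⟨huC, huC⟩
    | succ m ih =>
      rw [hCsrec _ (Nat.le_add_left 1 m), hDsrec _ (Nat.le_add_left 1 m), Nat.add_sub_cancel]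
      refine ⟨subset_closure (subset_convexHull ℝ _ ⟨ih.1, ?_⟩), ih.2, ?_⟩
      · rw [Function.iterate_fixed huFix, sub_self, norm_zero]
        exact mul_nonneg (ht _).1.le (norm_nonneg _)
      · rcases m.eq_zero_or_pos with rfl | hm
        · simp [hX1, hj0]
        · exact duality_map_apply_nonneg_of_nearest j hj0 hjuniq
            ((hCs_convex m hm).inter (hDs_convex m)) (hXmem m hm) (hXmin m hm) ih
  exact fun n hn => hXmin n hn u (hu n)

/-- **(3.1) in the proof of Theorem 3.3.** In the Setup, with `u` the unique
point of `F(T)` nearest to `x`, one has `‖x - x_(n+1)‖ ≤ ‖x - u‖` for all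
`n ≥ 1`. -/
theorem dist_le_dist_nearest_fixed_point
    (E : Type*) [NormedAddCommGroup E] [NormedSpace ℝ E] [CompleteSpace E]
    [UniformConvexSpace E]
    -- smoothness: the (unique) duality/norming functional map `j`
    (j : E → E →L[ℝ] ℝ)
    (hj0 : j 0 = 0)
    (hjnorm : ∀ y : E, y ≠ 0 → ‖j y‖ = ‖y‖)
    (hjval : ∀ y : E, (j y) y = ‖y‖ ^ 2)
    (hjuniq : ∀ y : E, y ≠ 0 → ∀ f : E →L[ℝ] ℝ, ‖f‖ = ‖y‖ → f y = ‖y‖ ^ 2 →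
      f = j y)
    (C : Set E) (hCne : C.Nonempty) (hCb : Bornology.IsBounded C)
    (hCcl : IsClosed C) (hCcv : Convex ℝ C)
    (T : E → E) (hTmaps : Set.MapsTo T C C)
    (k : ℕ → ℝ) (hk : ∀ n, 1 ≤ n → 1 ≤ k n)
    (hklim : Filter.Tendsto k Filter.atTop (nhds 1))
    (hTan : ∀ n, 1 ≤ n → ∀ y ∈ C, ∀ z ∈ C, ‖T^[n] y - T^[n] z‖ ≤ k n * ‖y - z‖)
    (t : ℕ → ℝ) (ht : ∀ n, t n ∈ Set.Ioo (0 : ℝ) 1)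
    (htlim : Filter.Tendsto t Filter.atTop (nhds 0))
    (x : E) (hx : x ∈ C)
    (hF : {z ∈ C | T z = z}.Nonempty)
    -- the (well-defined) sequences generated by the algorithm
    (X : ℕ → E) (Cs Ds : ℕ → Set E)
    (hX1 : X 1 = x) (hCs0 : Cs 0 = C) (hDs0 : Ds 0 = C)
    (hCsrec : ∀ n, 1 ≤ n → Cs n = closure (convexHull ℝ
      {z ∈ Cs (n - 1) | ‖z - T^[n] z‖ ≤ t n * ‖X n - T^[n] (X n)‖}))
    (hDsrec : ∀ n, 1 ≤ n →
      Ds n = {z ∈ Ds (n - 1) | 0 ≤ (j (x - X n)) (X n - z)})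
    (hXmem : ∀ n, 1 ≤ n → X (n + 1) ∈ Cs n ∩ Ds n)
    (hXmin : ∀ n, 1 ≤ n → ∀ z ∈ Cs n ∩ Ds n, ‖x - X (n + 1)‖ ≤ ‖x - z‖)
    -- `u` is the (unique) point of `F(T)` nearest to `x`
    (u : E) (huC : u ∈ C) (huFix : T u = u)
    (hunearest : ∀ z ∈ C, T z = z → ‖x - u‖ ≤ ‖x - z‖) :
    ∀ n, 1 ≤ n → ‖x - X (n + 1)‖ ≤ ‖x - u‖ :=
  dist_le_dist_nearest_fixed_point_general E j hj0 hjuniq C hCcv T t ht x X Cs Ds hX1 hCs0 hDs0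
    hCsrec hDsrec hXmem hXmin u huC huFix
end
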